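/- For all integers n ≥ 1 and n+1 ≥ k ≥ 2, the nested-sum quantity a_{n,k} is related to the signed Stirling numbers of the first kind by a_{n,k} = (−1)^{n+k−1} (k−1)! · s(n, k−1). -/

import Mathlib

/-- Signed Stirling numbers of the first kind, defined by `s(0,0)=1`,
`s(n,0)=0` for `n ≥ 1`, `s(0,k)=0` for `k ≥ 1`, and
`s(n+1,k+1) = s(n,k) - n·s(n,k+1)`. -/
def stirling1 : ℕ → ℕ → ℤ
  | 0, 0 => 1
  | 0, _ + 1 => 0
  | _ + 1, 0 => 0
  | n + 1, k + 1 => stirling1 n k - (n : ℤ) * stirling1 n (k + 1)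

/-- `nestedSum j m` is the `j`-fold nested sum
`Σ_{ℓ1=1}^{m} (1/ℓ1) Σ_{ℓ2=1}^{ℓ1-1} (1/ℓ2) ⋯ Σ_{ℓj=1}^{ℓ_{j-1}-1} (1/ℓj)`,
with the empty (`j = 0`) nested sum equal to `1`. -/
noncomputable def nestedSum : ℕ → ℕ → ℝ
  | 0, _ => 1
  | j + 1, m => ∑ l ∈ Finset.Icc 1 m, (1 / (l : ℝ)) * nestedSum j (l - 1)
termination_by j _ => j

/-- The quantity `a_{n,k} = (k-1)!(n-1)!` times the `(k-2)`-fold nested sum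
`Σ_{ℓ1=1}^{n-1} (1/ℓ1) ⋯ Σ_{ℓ_{k-2}=1}^{ℓ_{k-3}-1} (1/ℓ_{k-2})`; in particular
`a_{n,2} = (n-1)!`. -/
noncomputable def a (n k : ℕ) : ℝ :=
  (Nat.factorial (k - 1) : ℝ) * (Nat.factorial (n - 1) : ℝ) * nestedSum (k - 2) (n - 1)

/-! The signed Stirling numbers are `s(n,k) = (-1)^(n+k) c(n,k)` with `c = Nat.stirlingFirst`
the unsigned ones. Splitting off the last term `ℓ₁ = m` of the outer sum shows that
`m! · nestedSum j m` satisfies the recurrence `c(m+2,j+2) = (m+1) c(m+1,j+2) + c(m+1,j+1)`,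
so it equals `c(m+1,j+1)`; with `n = m+1`, `k = j+2` the two signs in the theorem cancel. -/

open Nat

theorem stirling1_eq_neg_one_pow_mul_stirlingFirst (n k : ℕ) :
    stirling1 n k = (-1) ^ (n + k) * stirlingFirst n k := by
  induction n generalizing k with
  | zero => cases k <;> simp [stirling1]
  | succ n ih =>
    cases k with
    | zero => simp [stirling1]
    | succ k =>
      rw [stirling1, ih, ih, stirlingFirst_succ_succ]
      push_cast
      ring

theorem nestedSum_zero (m : ℕ) : nestedSum 0 m = 1 := by
  rw [nestedSum]

theorem nestedSum_succ_zero (j : ℕ) : nestedSum (j + 1) 0 = 0 := by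
  simp [nestedSum]

theorem nestedSum_succ_succ (j m : ℕ) :
    nestedSum (j + 1) (m + 1) = nestedSum (j + 1) m + nestedSum j m / (m + 1) := by
  rw [nestedSum, nestedSum, Finset.sum_Icc_succ_top (by omega)]
  push_cast
  ring

theorem factorial_mul_nestedSum (m j : ℕ) :
    (m ! : ℝ) * nestedSum j m = stirlingFirst (m + 1) (j + 1) := by
  induction m generalizing j with
  | zero => cases j <;> simp [nestedSum_zero, nestedSum_succ_zero, stirlingFirst_succ_succ]
  | succ m ih =>
    cases j with
    | zero => simp [nestedSum_zero, stirlingFirst_one_right]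
    | succ j =>
      rw [stirlingFirst_succ_succ (m + 1), nestedSum_succ_succ, factorial_succ]
      push_cast
      rw [← ih j, ← ih (j + 1)]
      field_simp

theorem a_eq_stirling1_general (n k : ℕ) (hn : 1 ≤ n) (h2 : 2 ≤ k) :
    a n k = (-1 : ℝ) ^ (n + k - 1) * (Nat.factorial (k - 1) : ℝ) *
      (stirling1 n (k - 1) : ℝ) := by
  obtain ⟨m, rfl⟩ : ∃ m, n = m + 1 := ⟨n - 1, by omega⟩
  obtain ⟨j, rfl⟩ : ∃ j, k = j + 2 := ⟨k - 2, by omega⟩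
  have hsign : (-1 : ℝ) ^ (m + 1 + (j + 2) - 1) * (-1) ^ (m + 1 + (j + 1)) = 1 := by
    rw [← pow_add, show m + 1 + (j + 2) - 1 + (m + 1 + (j + 1)) = 2 * (m + j + 2) by omega,
      pow_mul, neg_one_sq, one_pow]
  rw [a, stirling1_eq_neg_one_pow_mul_stirlingFirst, Nat.add_sub_cancel, Nat.add_sub_cancel,
    show j + 2 - 1 = j + 1 from rfl, mul_assoc, factorial_mul_nestedSum]
  push_cast
  linear_combination -(j + 1)! * (stirlingFirst (m + 1) (j + 1) : ℝ) * hsign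

/-- For `n ≥ 1` and `2 ≤ k ≤ n+1`, the nested-sum quantity `a_{n,k}` is related to
the signed Stirling numbers of the first kind by `a_{n,k} = (-1)^{n+k-1} (k-1)! s(n,k-1)`. -/
theorem a_eq_stirling1 (n k : ℕ) (hn : 1 ≤ n) (h2 : 2 ≤ k) (hk : k ≤ n + 1) :
    a n k = (-1 : ℝ) ^ (n + k - 1) * (Nat.factorial (k - 1) : ℝ) *
      (stirling1 n (k - 1) : ℝ) :=
  a_eq_stirling1_general n k hn h2
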